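/- Let l(x) = log(1 + exp(-x)). Then for every real x, -l'(x) = 1/(1 + exp(x)), and -l'(x) ≥ min(1/2, l(x)/(2 log 2)). -/

import Mathlib

/-!
With `s = 1 / (1 + eˣ)` one has `l(x) = -log (1 - s)`. For `x ≤ 0`, `s ≥ 1/2`; for `x > 0`,
`s ≤ 1/2`, and `log` lying above its chord on `[1/2, 1]` gives `-log (1 - s) ≤ 2 log 2 · s`.
-/

/-- The logistic (cross-entropy) loss `l(x) = log(1 + e^{-x})`. -/
noncomputable def logisticLoss (x : ℝ) : ℝ := Real.log (1 + Real.exp (-x))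

open Real

theorem Real.neg_log_one_sub_le {s : ℝ} (hs₀ : 0 ≤ s) (hs : s ≤ 1 / 2) :
    -log (1 - s) ≤ 2 * log 2 * s := by
  have hchord := strictConcaveOn_log_Ioi.concaveOn.2 (Set.mem_Ioi.2 one_pos)
    (Set.mem_Ioi.2 (by norm_num : (0 : ℝ) < 1 / 2)) (by linarith : 0 ≤ 1 - 2 * s)
    (by linarith : 0 ≤ 2 * s) (by ring)
  rw [smul_eq_mul, smul_eq_mul, smul_eq_mul, smul_eq_mul, log_one, one_div, log_inv,
    show (1 - 2 * s) * 1 + 2 * s * 2⁻¹ = 1 - s by ring] at hchord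
  linarith

theorem hasDerivAt_logisticLoss (x : ℝ) :
    HasDerivAt logisticLoss (-(1 / (1 + exp x))) x := by
  have h : HasDerivAt logisticLoss (exp (-x) * -1 / (1 + exp (-x))) x :=
    (((hasDerivAt_neg x).exp).const_add 1).log (by positivity)
  convert h using 1
  rw [exp_neg]
  field_simp
  ring

theorem logisticLoss_eq_neg_log_one_sub (x : ℝ) :
    logisticLoss x = -log (1 - 1 / (1 + exp x)) := by
  rw [logisticLoss, ← log_inv]
  congr 1
  rw [exp_neg]
  field_simp
  ring

theorem stmt_3 (x : ℝ) :
    -deriv logisticLoss x = 1 / (1 + Real.exp x) ∧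
    -deriv logisticLoss x ≥ min (1 / 2) (logisticLoss x / (2 * Real.log 2)) := by
  have hderiv : -deriv logisticLoss x = 1 / (1 + exp x) := by
    rw [(hasDerivAt_logisticLoss x).deriv, neg_neg]
  refine ⟨hderiv, ?_⟩
  rw [hderiv, ge_iff_le]
  rcases le_or_gt x 0 with hx | hx
  · refine min_le_of_left_le ?_
    gcongr
    linarith [exp_le_one_iff.2 hx]
  · refine min_le_of_right_le ?_
    have hs : 1 / (1 + exp x) ≤ 1 / 2 := by
      gcongr
      linarith [one_lt_exp_iff.2 hx]
    rw [div_le_iff₀ (by positivity [log_pos one_lt_two]), logisticLoss_eq_neg_log_one_sub]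
    linarith [neg_log_one_sub_le (by positivity) hs]
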